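/- arXiv:2312.04996 — 4 statements merged into one kernel-verified Lean document; each statement's English description precedes it below -/
import Mathlib

section
/- Let L be a field of characteristic ≠ 2, and let α, β, x₀, x, u, v ∈ L with α ≠ β, x₀ ≠ α, x₀ ≠ β. Set c_α = x₀ − α and c_β = x₀ − β, and assume c_α·u² = x − α and c_β·v² = x − β. Then (1 + (c_α·u − c_β·v)/(α − β)) · (1 + (c_α·u − c_β·v)/(β − α)) = −c_α·c_β·(u − v)²/(α − β)². In particular this product equals −c_α·c_β times a square of L. -/
/-!
Writing `N = c_α u − c_β v` and `d = α − β`, the two factors are `1 + N/d` and `1 − N/d`, so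
their product is `(d² − N²)/d²`. Substituting `c_α u² = x − α` and `c_β v² = x − β` collapses
`d² − N²` to `−c_α c_β (u − v)²`.
-/

lemma one_add_div_mul_one_add_div_neg {K : Type*} [Field K] {d : K} (n : K) (hd : d ≠ 0) :
    (1 + n / d) * (1 + n / -d) = (d ^ 2 - n ^ 2) / d ^ 2 := by
  field_simp
  ring

lemma sq_sub_sq_eq_neg_mul_mul_sq {R : Type*} [CommRing R] {α β x₀ x u v : R}
    (hu : (x₀ - α) * u ^ 2 = x - α) (hv : (x₀ - β) * v ^ 2 = x - β) :
    (α - β) ^ 2 - ((x₀ - α) * u - (x₀ - β) * v) ^ 2 = -((x₀ - α) * (x₀ - β)) * (u - v) ^ 2 := by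
  linear_combination (α - β) * hu + (β - α) * hv

theorem nonabelian_xT_product_general {L : Type*} [Field L]
    (α β x₀ x u v : L) (hαβ : α ≠ β)
    (hu : (x₀ - α) * u ^ 2 = x - α) (hv : (x₀ - β) * v ^ 2 = x - β) :
    (1 + ((x₀ - α) * u - (x₀ - β) * v) / (α - β)) *
        (1 + ((x₀ - α) * u - (x₀ - β) * v) / (β - α)) =
      -((x₀ - α) * (x₀ - β)) * (u - v) ^ 2 / (α - β) ^ 2 ∧
    ∃ w : L,
      (1 + ((x₀ - α) * u - (x₀ - β) * v) / (α - β)) *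
          (1 + ((x₀ - α) * u - (x₀ - β) * v) / (β - α)) =
        -((x₀ - α) * (x₀ - β)) * w ^ 2 := by
  have hprod : (1 + ((x₀ - α) * u - (x₀ - β) * v) / (α - β)) *
        (1 + ((x₀ - α) * u - (x₀ - β) * v) / (β - α)) =
      -((x₀ - α) * (x₀ - β)) * (u - v) ^ 2 / (α - β) ^ 2 := by
    rw [← neg_sub α β, one_add_div_mul_one_add_div_neg _ (sub_ne_zero.mpr hαβ),
      sq_sub_sq_eq_neg_mul_mul_sq hu hv]
  exact ⟨hprod, (u - v) / (α - β), by rw [hprod, div_pow, mul_div_assoc]⟩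

/-- Product identity for the two lifts appearing in the nonabelian `(x − T)` map:
with `c_α = x₀ − α`, `c_β = x₀ − β`, `c_α·u² = x − α` and `c_β·v² = x − β`, one has
`(1 + (c_αu − c_βv)/(α−β))·(1 + (c_αu − c_βv)/(β−α)) = −c_αc_β(u−v)²/(α−β)²`;
in particular this product is `−c_αc_β` times a square. -/
theorem nonabelian_xT_product {L : Type*} [Field L] (hchar : (2 : L) ≠ 0)
    (α β x₀ x u v : L) (hαβ : α ≠ β) (h₀α : x₀ ≠ α) (h₀β : x₀ ≠ β)
    (hu : (x₀ - α) * u ^ 2 = x - α) (hv : (x₀ - β) * v ^ 2 = x - β) :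
    (1 + ((x₀ - α) * u - (x₀ - β) * v) / (α - β)) *
        (1 + ((x₀ - α) * u - (x₀ - β) * v) / (β - α)) =
      -((x₀ - α) * (x₀ - β)) * (u - v) ^ 2 / (α - β) ^ 2 ∧
    ∃ w : L,
      (1 + ((x₀ - α) * u - (x₀ - β) * v) / (α - β)) *
          (1 + ((x₀ - α) * u - (x₀ - β) * v) / (β - α)) =
        -((x₀ - α) * (x₀ - β)) * w ^ 2 :=
  nonabelian_xT_product_general α β x₀ x u v hαβ hu hv
end

section
/- Let R be a commutative ring, f ∈ ℤ[T] a polynomial, and x, y ∈ R with y² − y = f(x) (evaluating f via the canonical ℤ-algebra structure of R). Define a sequence (y_n) in R by y₁ = y² and y_{n+1} = y_n − (y_n² − y_n − f(x²)). Then for every n ≥ 1, 2ⁿ divides y_n² − y_n − f(x²) in R. -/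
lemma frob_poly_two (f : Polynomial ℤ) :
    (2 : Polynomial ℤ) ∣ f ^ 2 - Polynomial.expand ℤ 2 f := by
  induction f using Polynomial.induction_on with
  | C a =>
      simp only [Polynomial.expand_C]
      rw [← Polynomial.C_pow, ← Polynomial.C_sub]
      rcases Int.even_mul_succ_self (a - 1) with ⟨k, hk⟩
      refine ⟨Polynomial.C k, ?_⟩
      have h2 : (2 : Polynomial ℤ) = Polynomial.C 2 := by simp
      rw [h2, ← Polynomial.C_mul]
      congr 1
      ring_nf; ring_nf at hk; linarith
  | add p q hp hq =>
      have : (p + q) ^ 2 - Polynomial.expand ℤ 2 (p + q)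
          = (p ^ 2 - Polynomial.expand ℤ 2 p) + (q ^ 2 - Polynomial.expand ℤ 2 q)
            + 2 * (p * q) := by
        rw [map_add]; ring
      rw [this]
      exact dvd_add (dvd_add hp hq) (Dvd.intro _ rfl)
  | monomial n a _ =>
      simp only [map_mul, map_pow, Polynomial.expand_C, Polynomial.expand_X]
      have : (Polynomial.C a * Polynomial.X ^ (n + 1)) ^ 2
          - Polynomial.C a * (Polynomial.X ^ 2) ^ (n + 1)
          = Polynomial.C (a ^ 2 - a) * Polynomial.X ^ (2 * (n + 1)) := by
        rw [Polynomial.C_sub, Polynomial.C_pow]; ring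
      rw [this]
      rcases Int.even_mul_succ_self (a - 1) with ⟨k, hk⟩
      refine ⟨Polynomial.C k * Polynomial.X ^ (2 * (n + 1)), ?_⟩
      have h2 : (2 : Polynomial ℤ) = Polynomial.C 2 := by simp
      rw [h2, ← mul_assoc, ← Polynomial.C_mul]
      congr 2
      ring_nf; ring_nf at hk; linarith

/-- Convergence of the 2-adic Frobenius lift on `y² − y = f(x)`: if `y² − y = f(x)`
in a commutative ring `R` (with `f ∈ ℤ[T]`), and the sequence `(y_n)` is defined by
`y₁ = y²` and `y_{n+1} = y_n − (y_n² − y_n − f(x²))`, then `2ⁿ` divides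
`y_n² − y_n − f(x²)` in `R` for every `n ≥ 1`. -/
theorem frobenius_lift_convergence {R : Type*} [CommRing R]
    (f : Polynomial ℤ) (x y : R)
    (hxy : y ^ 2 - y = Polynomial.aeval x f)
    (Y : ℕ → R) (hY1 : Y 1 = y ^ 2)
    (hYrec : ∀ n, 1 ≤ n →
      Y (n + 1) = Y n - (Y n ^ 2 - Y n - Polynomial.aeval (x ^ 2) f)) :
    ∀ n, 1 ≤ n → (2 : R) ^ n ∣ Y n ^ 2 - Y n - Polynomial.aeval (x ^ 2) f := by
  -- key: 2 ∣ f(x)² − f(x²)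
  have key : (2 : R) ∣ (Polynomial.aeval x f) ^ 2 - Polynomial.aeval (x ^ 2) f := by
    obtain ⟨g, hg⟩ := frob_poly_two f
    refine ⟨Polynomial.aeval x g, ?_⟩
    have := congrArg (Polynomial.aeval x) hg
    simpa [Polynomial.expand_aeval, map_ofNat] using this
  intro n hn
  induction n with
  | zero => omega
  | succ m ih =>
      rcases Nat.eq_or_lt_of_le hn with h1 | h1
      · -- base case m + 1 = 1
        have hm : m = 0 := by omega
        subst hm
        rw [hY1, pow_one]
        have hbase : (y ^ 2) ^ 2 - y ^ 2 - Polynomial.aeval (x ^ 2) f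
            = ((Polynomial.aeval x f) ^ 2 - Polynomial.aeval (x ^ 2) f)
              + 2 * (y ^ 3 - y ^ 2) := by
          rw [← hxy]; ring
        rw [hbase]
        exact dvd_add key (Dvd.intro _ rfl)
      · have hm : 1 ≤ m := by omega
        obtain ⟨q, hq⟩ := ih hm
        set c := Polynomial.aeval (x ^ 2) f with hc
        have hstep : Y (m + 1) ^ 2 - Y (m + 1) - c
            = 2 * (Y m ^ 2 - Y m - c) - 2 * Y m * (Y m ^ 2 - Y m - c)
              + (Y m ^ 2 - Y m - c) ^ 2 := by
          rw [hYrec m hm]; ring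
        rw [hstep, hq]
        refine ⟨q - Y m * q + 2 ^ (m - 1) * q ^ 2, ?_⟩
        have h2 : (2 : R) ^ (m + 1) * 2 ^ (m - 1) = (2 ^ m) ^ 2 := by
          rw [← pow_add, ← pow_mul]
          congr 1
          omega
        calc 2 * (2 ^ m * q) - 2 * Y m * (2 ^ m * q) + (2 ^ m * q) ^ 2
            = 2 ^ (m + 1) * q - 2 ^ (m + 1) * (Y m * q)
              + ((2 : R) ^ (m + 1) * 2 ^ (m - 1)) * q ^ 2 := by rw [h2]; ring
          _ = 2 ^ (m + 1) * (q - Y m * q + 2 ^ (m - 1) * q ^ 2) := by ring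
end

section
/- Let F be the free group on generators x₁, …, x_m with m ≥ 2, and fix distinct indices i ≠ j. Let ψ_i : F → ℤ/2ℤ be the homomorphism with ψ_i(x_i) = 1 and ψ_i(x_k) = 0 for k ≠ i, let G_i = ker ψ_i, and let H_i ≤ G_i be the subgroup generated by all commutators [a, b] with a, b ∈ G_i together with all squares a² with a ∈ G_i (the kernel of G_i → G_i^{ab} ⊗ 𝔽₂). Then the commutator [x_i, x_j] = x_i x_j x_i⁻¹ x_j⁻¹ lies in G_i but does not lie in H_i; equivalently, the image of [x_i, x_j] in G_i^{ab} ⊗ 𝔽₂ is nonzero. -/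
open scoped commutatorElement

/-!
Map `F` to the dihedral group `D₄ = ⟨r, s⟩` of order 8 by `xᵢ ↦ r`, `xⱼ ↦ s` and the other
generators to `1`. Composed with the parity of the index (`r k, s r k ↦ k mod 2`) this is `ψᵢ`,
so `Gᵢ` lands in the kernel `{1, r², s, s r²}` of the parity, a Klein four-group. Commutators and
squares of that group are trivial, so `Hᵢ` maps to `1`, whereas `⁅xᵢ, xⱼ⁆ ↦ ⁅r, s⁆ = r² ≠ 1`.
-/

namespace Subgroup

variable {G Q : Type*} [Group G] [Group Q]

def modTwoAbelianizationKernel (K : Subgroup G) : Subgroup G :=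
  closure {x | (∃ a ∈ K, ∃ b ∈ K, x = ⁅a, b⁆) ∨ ∃ a ∈ K, x = a ^ 2}

theorem modTwoAbelianizationKernel_le_ker {K : Subgroup G} {A : Subgroup Q} {ρ : G →* Q}
    (hKA : K ≤ A.comap ρ) (hcomm : ∀ a ∈ A, ∀ b ∈ A, ⁅a, b⁆ = 1) (hsq : ∀ a ∈ A, a ^ 2 = 1) :
    K.modTwoAbelianizationKernel ≤ ρ.ker := by
  rw [modTwoAbelianizationKernel, closure_le]
  rintro x (⟨a, ha, b, hb, rfl⟩ | ⟨a, ha, rfl⟩)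
  · rw [SetLike.mem_coe, MonoidHom.mem_ker, map_commutatorElement]
    exact hcomm _ (hKA ha) _ (hKA hb)
  · rw [SetLike.mem_coe, MonoidHom.mem_ker, map_pow]
    exact hsq _ (hKA ha)

end Subgroup

namespace DihedralGroup

def indexParity : DihedralGroup 4 →* Multiplicative (ZMod 2) where
  toFun
    | r k => Multiplicative.ofAdd (k.cast : ZMod 2)
    | sr k => Multiplicative.ofAdd (k.cast : ZMod 2)
  map_one' := rfl
  map_mul' := by decide

theorem commutator_eq_one_of_mem_ker_indexParity :
    ∀ a ∈ indexParity.ker, ∀ b ∈ indexParity.ker, ⁅a, b⁆ = 1 := by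
  simp only [MonoidHom.mem_ker]
  decide

theorem sq_eq_one_of_mem_ker_indexParity : ∀ a ∈ indexParity.ker, a ^ 2 = 1 := by
  simp only [MonoidHom.mem_ker]
  decide

end DihedralGroup

open DihedralGroup in
theorem commutator_mem_ker_not_mem_mod_two_abelianization_kernel_general
    (m : ℕ) (i j : Fin m) (hij : i ≠ j)
    (ψ : FreeGroup (Fin m) →* Multiplicative (ZMod 2))
    (hψ : ∀ l : Fin m, ψ (FreeGroup.of l) =
      Multiplicative.ofAdd (if l = i then 1 else 0)) :
    ⁅FreeGroup.of i, FreeGroup.of j⁆ ∈ ψ.ker ∧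
      ⁅FreeGroup.of i, FreeGroup.of j⁆ ∉
        Subgroup.closure {x : FreeGroup (Fin m) |
          (∃ a ∈ ψ.ker, ∃ b ∈ ψ.ker, x = ⁅a, b⁆) ∨ ∃ a ∈ ψ.ker, x = a ^ 2} := by
  refine ⟨?_, fun hmem => ?_⟩
  · rw [MonoidHom.mem_ker, map_commutatorElement, commutatorElement_eq_one_iff_mul_comm,
      mul_comm]
  let ρ : FreeGroup (Fin m) →* DihedralGroup 4 :=
    FreeGroup.lift fun k => if k = i then r 1 else if k = j then sr 0 else 1
  have hρi : ρ (FreeGroup.of i) = r 1 := by simp [ρ]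
  have hρj : ρ (FreeGroup.of j) = sr 0 := by simp [ρ, hij.symm]
  have hρψ : indexParity.comp ρ = ψ := by
    refine FreeGroup.ext_hom _ _ fun k => ?_
    rw [hψ]
    by_cases hki : k = i
    · subst hki; rw [MonoidHom.comp_apply, hρi, if_pos rfl]; rfl
    by_cases hkj : k = j
    · subst hkj; rw [MonoidHom.comp_apply, hρj, if_neg hki]; rfl
    · simp [ρ, hki, hkj]
  have hle : ψ.ker.modTwoAbelianizationKernel ≤ ρ.ker :=
    Subgroup.modTwoAbelianizationKernel_le_ker (hρψ ▸ (MonoidHom.comap_ker _ _).ge)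
      commutator_eq_one_of_mem_ker_indexParity sq_eq_one_of_mem_ker_indexParity
  have hρ_comm : ρ ⁅FreeGroup.of i, FreeGroup.of j⁆ = 1 := hle hmem
  rw [map_commutatorElement, hρi, hρj] at hρ_comm
  exact absurd hρ_comm (by decide)

/-- Let `F` be the free group on `m ≥ 2` generators, `ψᵢ : F → ℤ/2` the homomorphism
sending `xᵢ` to `1` and the other generators to `0`, `Gᵢ = ker ψᵢ`, and `Hᵢ` the
subgroup generated by the commutators and squares of elements of `Gᵢ` (the kernel
of the mod-2 abelianization of `Gᵢ`). For `j ≠ i`, the commutator `⁅xᵢ, xⱼ⁆` lies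
in `Gᵢ` but not in `Hᵢ`. -/
theorem commutator_mem_ker_not_mem_mod_two_abelianization_kernel
    (m : ℕ) (hm : 2 ≤ m) (i j : Fin m) (hij : i ≠ j)
    (ψ : FreeGroup (Fin m) →* Multiplicative (ZMod 2))
    (hψ : ∀ l : Fin m, ψ (FreeGroup.of l) =
      Multiplicative.ofAdd (if l = i then 1 else 0)) :
    ⁅FreeGroup.of i, FreeGroup.of j⁆ ∈ ψ.ker ∧
      ⁅FreeGroup.of i, FreeGroup.of j⁆ ∉
        Subgroup.closure {x : FreeGroup (Fin m) |
          (∃ a ∈ ψ.ker, ∃ b ∈ ψ.ker, x = ⁅a, b⁆) ∨ ∃ a ∈ ψ.ker, x = a ^ 2} :=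
  commutator_mem_ker_not_mem_mod_two_abelianization_kernel_general m i j hij ψ hψ
end

section
/- Let n ≥ 3 be an odd natural number, and let M = {v ∈ 𝔽₂ⁿ : Σᵢ vᵢ = 0} be the standard (n−1)-dimensional representation of the symmetric group Sₙ over 𝔽₂, where Sₙ acts on 𝔽₂ⁿ by permuting coordinates and M is an invariant subspace. Then every Sₙ-equivariant 𝔽₂-linear map M → ⋀²M is zero, where ⋀²M is the second exterior power of M with the induced Sₙ-action. -/
set_option maxHeartbeats 4000000


open TensorProduct

/-- The submodule of `M ⊗ M` generated by the elements `x ⊗ x`. -/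
def wedgeSqRel (k M : Type*) [CommRing k] [AddCommGroup M] [Module k M] :
    Submodule k (TensorProduct k M M) :=
  Submodule.span k {z | ∃ x : M, z = x ⊗ₜ[k] x}

/-- The second exterior power `⋀²M := (M ⊗ M)/⟨x ⊗ x⟩` of a module `M`. -/
abbrev WedgeSq (k M : Type*) [CommRing k] [AddCommGroup M] [Module k M] :=
  TensorProduct k M M ⧸ wedgeSqRel k M

/-- The wedge product `x ∧ y`, i.e. the class of `x ⊗ y` in `⋀²M`. -/
noncomputable def wedge (k : Type*) {M : Type*} [CommRing k] [AddCommGroup M] [Module k M]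
    (x y : M) : WedgeSq k M :=
  Submodule.Quotient.mk (x ⊗ₜ[k] y)

/-- Functoriality of the second exterior power. -/
noncomputable def wedgeMap {k M N : Type*} [CommRing k] [AddCommGroup M] [Module k M]
    [AddCommGroup N] [Module k N] (f : M →ₗ[k] N) :
    WedgeSq k M →ₗ[k] WedgeSq k N :=
  Submodule.liftQ _ ((wedgeSqRel k N).mkQ.comp (TensorProduct.map f f)) (by
    rw [wedgeSqRel, Submodule.span_le]
    rintro z ⟨x, rfl⟩
    simp only [SetLike.mem_coe, LinearMap.mem_ker, LinearMap.comp_apply,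
      TensorProduct.map_tmul, Submodule.mkQ_apply, Submodule.Quotient.mk_eq_zero]
    exact Submodule.subset_span ⟨f x, rfl⟩)


section Aux
variable {n : ℕ} (M : Submodule (ZMod 2) (Fin n → ZMod 2))

lemma zmod2_add_self (a : ZMod 2) : a + a = 0 := by revert a; decide

lemma zmod2_dual {α : Type*} [DecidableEq α] (a b i j : α) (hab : a ≠ b) (hij : i ≠ j) :
    (((if a = i then (0 : ZMod 2) else 1) * (if b = j then (0:ZMod 2) else 1)
        + (if b = i then (0:ZMod 2) else 1) * (if a = j then (0:ZMod 2) else 1))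
      + ((if a = i then (0:ZMod 2) else 1) * 1 + 1 * (if a = j then (0:ZMod 2) else 1)))
      + ((if b = i then (0:ZMod 2) else 1) * 1 + 1 * (if b = j then (0:ZMod 2) else 1))
    = if (a = i ∧ b = j) ∨ (b = i ∧ a = j) then 1 else 0 := by
  by_cases h1 : a = i <;> by_cases h2 : b = j <;> by_cases h3 : b = i <;> by_cases h4 : a = j <;>
    simp_all <;> decide

noncomputable def bform (s t : Fin n) : M →ₗ[ZMod 2] M →ₗ[ZMod 2] ZMod 2 :=
  LinearMap.mk₂ (ZMod 2)
    (fun x y => (x : Fin n → ZMod 2) s * (y : Fin n → ZMod 2) t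
              + (x : Fin n → ZMod 2) t * (y : Fin n → ZMod 2) s)
    (by intros; simp; ring) (by intros; simp [smul_eq_mul]; ring)
    (by intros; simp; ring) (by intros; simp [smul_eq_mul]; ring)

lemma bform_apply (s t : Fin n) (x y : M) :
    bform M s t x y = (x : Fin n → ZMod 2) s * (y : Fin n → ZMod 2) t
              + (x : Fin n → ZMod 2) t * (y : Fin n → ZMod 2) s := rfl

lemma bform_comm (s t : Fin n) : bform M s t = bform M t s := by
  ext x y; simp [bform_apply]; ring

/-- The bilinear form descended to the wedge square. -/
noncomputable def Bq (s t : Fin n) : WedgeSq (ZMod 2) M →ₗ[ZMod 2] ZMod 2 :=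
  Submodule.liftQ _ (TensorProduct.lift (bform M s t)) (by
    rw [wedgeSqRel, Submodule.span_le]
    rintro z ⟨x, rfl⟩
    simp only [SetLike.mem_coe, LinearMap.mem_ker, TensorProduct.lift.tmul, bform_apply]
    rw [mul_comm]; exact zmod2_add_self _)

lemma Bq_mk (s t : Fin n) (x y : M) :
    Bq M s t (Submodule.Quotient.mk (x ⊗ₜ[ZMod 2] y))
      = (x : Fin n → ZMod 2) s * (y : Fin n → ZMod 2) t
        + (x : Fin n → ZMod 2) t * (y : Fin n → ZMod 2) s := by
  simp [Bq, Submodule.liftQ_apply]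
  rfl

lemma Bq_comm (s t : Fin n) : Bq M s t = Bq M t s := by
  apply Submodule.linearMap_qext
  apply TensorProduct.ext'
  intro x y
  simp only [LinearMap.comp_apply, Submodule.mkQ_apply, Bq_mk]
  ring

lemma wedgeMap_mk {k M N : Type*} [CommRing k] [AddCommGroup M] [Module k M]
    [AddCommGroup N] [Module k N] (f : M →ₗ[k] N) (x y : M) :
    wedgeMap f (Submodule.Quotient.mk (x ⊗ₜ[k] y)) = Submodule.Quotient.mk (f x ⊗ₜ[k] f y) := by
  simp [wedgeMap, Submodule.liftQ_apply]

end Aux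

/-- For odd `n ≥ 3`, every `Sₙ`-equivariant `𝔽₂`-linear map from the standard
module `M = {v ∈ 𝔽₂ⁿ : Σ vᵢ = 0}` (with `Sₙ` permuting coordinates) to its second
exterior power `⋀²M` is zero. -/
theorem standard_module_hom_wedgeSq_eq_zero
    (n : ℕ) (hn : 3 ≤ n) (hodd : Odd n)
    (M : Submodule (ZMod 2) (Fin n → ZMod 2))
    (hM : ∀ v : Fin n → ZMod 2, v ∈ M ↔ ∑ i, v i = 0)
    (ρ : Representation (ZMod 2) (Equiv.Perm (Fin n)) M)
    (hρ : ∀ (σ : Equiv.Perm (Fin n)) (v : M) (i : Fin n),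
      (ρ σ v : Fin n → ZMod 2) i = (v : Fin n → ZMod 2) (σ⁻¹ i))
    (φ : M →ₗ[ZMod 2] WedgeSq (ZMod 2) M)
    (hφ : ∀ σ : Equiv.Perm (Fin n),
      φ ∘ₗ (ρ σ : M →ₗ[ZMod 2] M) = wedgeMap (ρ σ : M →ₗ[ZMod 2] M) ∘ₗ φ) :
    φ = 0 := by
  have hn2 : (n : ZMod 2) = 1 := by
    obtain ⟨m, hm⟩ := hodd
    subst hm; push_cast; rw [(by decide : (2:ZMod 2) = 0)]; ring
  -- the distinguished last index
  set last : Fin n := ⟨n - 1, by omega⟩ with hlast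
  have hlt_last : ∀ i : Fin n, i ≠ last → i < last := by
    intro i hi
    have := i.2
    refine Fin.lt_def.mpr ?_
    simp only [hlast]
    rcases Nat.lt_or_ge i.val (n-1) with h | h
    · exact h
    · exfalso; exact hi (Fin.ext (by simp only [hlast]; omega))
  -- the vectors u i = 1 + e i
  have humem : ∀ i : Fin n, (fun j => if j = i then 0 else 1 : Fin n → ZMod 2) ∈ M := by
    intro i
    rw [hM]
    have : ∀ j : Fin n, (if j = i then (0:ZMod 2) else 1) = 1 + (if j = i then 1 else 0) := by
      intro j; split <;> decide
    rw [Finset.sum_congr rfl (fun j _ => this j)]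
    rw [Finset.sum_add_distrib, Finset.sum_const, Finset.sum_ite_eq' Finset.univ i (fun _ => (1:ZMod 2))]
    simp [hn2]
    decide
  set u : Fin n → M := fun i => ⟨_, humem i⟩ with hu
  have hucoe : ∀ i j : Fin n, (u i : Fin n → ZMod 2) j = if j = i then 0 else 1 := fun i j => rfl
  clear_value u
  -- the permutation action on the u's
  have huact : ∀ (σ : Equiv.Perm (Fin n)) (i : Fin n), ρ σ (u i) = u (σ i) := by
    intro σ i
    apply Subtype.ext
    funext j
    rw [hρ, hucoe, hucoe]
    congr 1
    simp only [eq_iff_iff]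
    constructor
    · intro h; rw [← h]; simp
    · intro h; rw [h]; simp
  -- the sum of all u's vanishes
  have husum : ∑ i, u i = (0 : M) := by
    apply Subtype.ext
    have hc : ((∑ i, u i : M) : Fin n → ZMod 2) = ∑ i, (u i : Fin n → ZMod 2) :=
      AddSubmonoidClass.coe_finset_sum u Finset.univ
    funext j
    rw [hc]
    simp only [Finset.sum_apply, hucoe]
    have : ∀ i : Fin n, (if j = i then (0:ZMod 2) else 1) = 1 + (if i = j then 1 else 0) := by
      intro i
      by_cases h : i = j
      · subst h; simp; exact (zmod2_add_self 1).symm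
      · rw [if_neg (fun hh => h hh.symm), if_neg h]; simp
    rw [Finset.sum_congr rfl (fun i _ => this i)]
    rw [Finset.sum_add_distrib, Finset.sum_const, Finset.sum_ite_eq' Finset.univ j (fun _ => (1:ZMod 2))]
    simp [hn2]
    exact zmod2_add_self 1
  -- representation of an arbitrary element of M in terms of the u i, i ≠ last
  have hrep : ∀ v : M, v = ∑ i ∈ Finset.univ.filter (· ≠ last),
      (((v : Fin n → ZMod 2) i + (v : Fin n → ZMod 2) last) • u i) := by
    intro v
    have hv0 : ∑ i, (v : Fin n → ZMod 2) i = 0 := (hM _).mp v.2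
    apply Subtype.ext
    have hc := AddSubmonoidClass.coe_finset_sum
      (fun i => (((v : Fin n → ZMod 2) i + (v : Fin n → ZMod 2) last) • u i))
      (Finset.univ.filter (· ≠ last))
    rw [hc]
    funext j
    set c : Fin n → ZMod 2 := fun i => (v : Fin n → ZMod 2) i + (v : Fin n → ZMod 2) last with hcdef
    have hterm : ∀ i : Fin n, ((c i • u i : M) : Fin n → ZMod 2) j
        = c i + (if j = i then c i else 0) := by
      intro i
      rw [SetLike.val_smul, Pi.smul_apply, smul_eq_mul, hucoe]
      by_cases h : j = i
      · simp [h]; exact (zmod2_add_self _).symm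
      · simp [h]
    rw [Finset.sum_apply]
    rw [Finset.sum_congr rfl (fun i _ => hterm i)]
    rw [Finset.sum_add_distrib, Finset.sum_ite_eq]
    have hfil : Finset.univ.filter (· ≠ last) = Finset.univ.erase last := by
      ext i; simp [Finset.mem_erase, and_comm]
    have hcsum : ∑ i ∈ Finset.univ.filter (· ≠ last), c i = (v : Fin n → ZMod 2) last := by
      rw [hfil]
      have h1 : ∑ i ∈ Finset.univ.erase last, c i
          = (∑ i ∈ Finset.univ.erase last, (v : Fin n → ZMod 2) i)
            + (Finset.univ.erase last).card • (v : Fin n → ZMod 2) last := by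
        rw [hcdef, Finset.sum_add_distrib, Finset.sum_const]
      have h2 : ∑ i ∈ Finset.univ.erase last, (v : Fin n → ZMod 2) i
          = (v : Fin n → ZMod 2) last := by
        have h3 := Finset.sum_erase_add Finset.univ (fun i => (v : Fin n → ZMod 2) i)
          (Finset.mem_univ last)
        rw [hv0] at h3
        calc ∑ i ∈ Finset.univ.erase last, (v : Fin n → ZMod 2) i
            = (∑ i ∈ Finset.univ.erase last, (v : Fin n → ZMod 2) i
                + (v : Fin n → ZMod 2) last) + (v : Fin n → ZMod 2) last := by
              rw [add_assoc, zmod2_add_self, add_zero]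
          _ = (v : Fin n → ZMod 2) last := by rw [h3, zero_add]
      have h4 : (Finset.univ.erase last).card • (v : Fin n → ZMod 2) last = 0 := by
        rw [Finset.card_erase_of_mem (Finset.mem_univ last), Finset.card_univ, Fintype.card_fin]
        rw [nsmul_eq_mul]
        have : ((n - 1 : ℕ) : ZMod 2) = 0 := by
          obtain ⟨m, hm⟩ := hodd
          subst hm
          have : 2 * m + 1 - 1 = 2 * m := rfl
          rw [this]; push_cast; rw [(by decide : (2:ZMod 2) = 0)]; ring
        rw [this, zero_mul]
      rw [h1, h2, h4, add_zero]
    rw [hcsum]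
    by_cases hj : j = last
    · subst hj
      rw [if_neg (by simp), add_zero]
    · rw [if_pos (by simp [hj]), hcdef]
      simp only []
      rw [add_comm ((v : Fin n → ZMod 2) j)]
      rw [← add_assoc, zmod2_add_self, zero_add]
  -- equivariance of the forms Bq
  have hBqequiv : ∀ (σ : Equiv.Perm (Fin n)) (s t : Fin n) (z : WedgeSq (ZMod 2) M),
      Bq M s t (wedgeMap (ρ σ : M →ₗ[ZMod 2] M) z) = Bq M (σ⁻¹ s) (σ⁻¹ t) z := by
    intro σ s t
    suffices h : (Bq M s t).comp (wedgeMap (ρ σ : M →ₗ[ZMod 2] M)) = Bq M (σ⁻¹ s) (σ⁻¹ t) from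
      fun z => LinearMap.congr_fun h z
    apply Submodule.linearMap_qext
    apply TensorProduct.ext'
    intro x y
    simp only [LinearMap.comp_apply, Submodule.mkQ_apply, wedgeMap_mk, Bq_mk]
    rw [hρ, hρ, hρ, hρ]
  -- the invariant element A
  set A : WedgeSq (ZMod 2) M := φ (u last) with hA
  clear_value A
  have hφu : ∀ i : Fin n, φ (u i) = wedgeMap (ρ (Equiv.swap i last) : M →ₗ[ZMod 2] M) A := by
    intro i
    have h := LinearMap.congr_fun (hφ (Equiv.swap i last)) (u last)
    simp only [LinearMap.comp_apply] at h
    rw [huact, Equiv.swap_apply_right] at h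
    rw [hA]
    exact h
  have hv_act : ∀ (σ : Equiv.Perm (Fin n)) (s t : Fin n), σ last = last →
      Bq M s t A = Bq M (σ⁻¹ s) (σ⁻¹ t) A := by
    intro σ s t hσ
    have hinv : wedgeMap (ρ σ : M →ₗ[ZMod 2] M) A = A := by
      have h := LinearMap.congr_fun (hφ σ) (u last)
      simp only [LinearMap.comp_apply] at h
      rw [huact, hσ] at h
      rw [hA]
      exact h.symm
    rw [← hBqequiv σ s t A, hinv]
  have hv_symm : ∀ s t : Fin n, Bq M s t A = Bq M t s A := by
    intro s t
    show Bq M s t A = Bq M t s A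
    rw [Bq_comm]
  -- transitivity on pairs avoiding `last`
  have hpair : ∀ s t s' t' : Fin n, s ≠ t → s' ≠ t' → s ≠ last → t ≠ last →
      s' ≠ last → t' ≠ last → Bq M s t A = Bq M s' t' A := by
    intro s t s' t' hst hs't' hs ht hs' ht'
    set σ1 := Equiv.swap s' s with hσ1
    set t1 := σ1 t' with ht1
    set σ2 := Equiv.swap t1 t with hσ2
    set σ := σ2 * σ1 with hσdef
    have hst1 : s ≠ t1 := by
      intro h
      have h2 : σ1 s = σ1 t1 := congrArg σ1 h
      rw [Equiv.swap_apply_right, ht1, Equiv.swap_apply_self] at h2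
      exact hs't' h2
    have hσs' : σ s' = s := by
      rw [hσdef, Equiv.Perm.mul_apply, hσ1, Equiv.swap_apply_left, hσ2,
        Equiv.swap_apply_of_ne_of_ne hst1 hst]
    have hσt' : σ t' = t := by
      rw [hσdef, Equiv.Perm.mul_apply, ← ht1, hσ2, Equiv.swap_apply_left]
    have hlast1 : last ≠ t1 := by
      intro h
      have h2 : σ1 last = σ1 t1 := congrArg σ1 h
      rw [Equiv.swap_apply_of_ne_of_ne (Ne.symm hs') (Ne.symm hs), ht1,
        Equiv.swap_apply_self] at h2
      exact ht' h2.symm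
    have hσlast : σ last = last := by
      rw [hσdef, Equiv.Perm.mul_apply, hσ1,
        Equiv.swap_apply_of_ne_of_ne (Ne.symm hs') (Ne.symm hs), hσ2,
        Equiv.swap_apply_of_ne_of_ne hlast1 (Ne.symm ht)]
    have h1 := hv_act σ s t hσlast
    have h2 : σ⁻¹ s = s' := by rw [Equiv.Perm.inv_eq_iff_eq, hσs']
    have h3 : σ⁻¹ t = t' := by rw [Equiv.Perm.inv_eq_iff_eq, hσt']
    rw [h1, h2, h3]
  have hlastv : ∀ s s' : Fin n, s ≠ last → s' ≠ last → Bq M s last A = Bq M s' last A := by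
    intro s s' hs hs'
    set σ := Equiv.swap s' s with hσdef
    have hσlast : σ last = last :=
      Equiv.swap_apply_of_ne_of_ne (Ne.symm hs') (Ne.symm hs)
    have h1 := hv_act σ s last hσlast
    have h2 : σ⁻¹ s = s' := by rw [Equiv.Perm.inv_eq_iff_eq, hσdef, Equiv.swap_apply_left]
    have h3 : σ⁻¹ last = last := by rw [Equiv.Perm.inv_eq_iff_eq, hσlast]
    rw [h1, h2, h3]
  -- maximality of last
  have hmax : ∀ i : Fin n, i ≠ last → i < last := hlt_last
  -- char two facts in the tensor module
  have hneg : ∀ z : TensorProduct (ZMod 2) M M, -z = z := by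
    intro z
    rw [← neg_one_smul (ZMod 2) z, (by decide : (-1 : ZMod 2) = (1 : ZMod 2)), one_smul]
  -- symmetry in the quotient
  have hmk_symm : ∀ x y : M, (Submodule.Quotient.mk (x ⊗ₜ[ZMod 2] y) : WedgeSq (ZMod 2) M)
      = Submodule.Quotient.mk (y ⊗ₜ[ZMod 2] x) := by
    intro x y
    rw [Submodule.Quotient.eq]
    have hid : x ⊗ₜ[ZMod 2] y - y ⊗ₜ[ZMod 2] x
        = ((x + y) ⊗ₜ[ZMod 2] (x + y) - x ⊗ₜ[ZMod 2] x - y ⊗ₜ[ZMod 2] y) - (y ⊗ₜ[ZMod 2] x + y ⊗ₜ[ZMod 2] x) := by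
      rw [TensorProduct.add_tmul]
      rw [TensorProduct.tmul_add, TensorProduct.tmul_add]
      abel
    rw [hid]
    have h2y : (y ⊗ₜ[ZMod 2] x + y ⊗ₜ[ZMod 2] x : TensorProduct (ZMod 2) M M) = 0 := by
      rw [← two_smul (ZMod 2) (y ⊗ₜ[ZMod 2] x), (by decide : (2 : ZMod 2) = 0), zero_smul]
    rw [h2y, sub_zero]
    exact Submodule.sub_mem _ (Submodule.sub_mem _
      (Submodule.subset_span ⟨x + y, rfl⟩) (Submodule.subset_span ⟨x, rfl⟩))
      (Submodule.subset_span ⟨y, rfl⟩)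
  have hmk_diag : ∀ x : M, (Submodule.Quotient.mk (x ⊗ₜ[ZMod 2] x) : WedgeSq (ZMod 2) M) = 0 := by
    intro x
    rw [Submodule.Quotient.mk_eq_zero]
    exact Submodule.subset_span ⟨x, rfl⟩
  -- the dual functionals
  set β : Fin n → Fin n → (WedgeSq (ZMod 2) M →ₗ[ZMod 2] ZMod 2) :=
    fun a b => Bq M a b + Bq M a last + Bq M b last with hβ
  have hβ_apply : ∀ (a b : Fin n) (z : WedgeSq (ZMod 2) M),
      β a b z = Bq M a b z + Bq M a last z + Bq M b last z := fun a b z => rfl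
  clear_value β
  -- values of β on the generators
  have hβmk : ∀ a b i j : Fin n, a ≠ b → a ≠ last → b ≠ last → i ≠ j → i ≠ last → j ≠ last →
      β a b (Submodule.Quotient.mk (u i ⊗ₜ[ZMod 2] u j))
        = if (a = i ∧ b = j) ∨ (b = i ∧ a = j) then 1 else 0 := by
    intro a b i j hab ha hb hij hi hj
    rw [hβ_apply, Bq_mk, Bq_mk, Bq_mk]
    simp only [hucoe]
    rw [if_neg (Ne.symm hi), if_neg (Ne.symm hj)]
    exact zmod2_dual a b i j hab hij
  -- the generators of the wedge square
  set g : Fin n × Fin n → WedgeSq (ZMod 2) M :=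
    fun p => Submodule.Quotient.mk (u p.1 ⊗ₜ[ZMod 2] u p.2) with hg
  have hg_apply : ∀ p : Fin n × Fin n,
      g p = Submodule.Quotient.mk (u p.1 ⊗ₜ[ZMod 2] u p.2) := fun p => rfl
  clear_value g
  set S : Finset (Fin n × Fin n) :=
    Finset.univ.filter (fun p => p.1 < p.2 ∧ p.2 ≠ last) with hS
  have hSmem : ∀ p : Fin n × Fin n, p ∈ S ↔ (p.1 < p.2 ∧ p.2 ≠ last) := by
    intro p; rw [hS, Finset.mem_filter]; simp
  have hSfacts : ∀ p ∈ S, p.1 ≠ p.2 ∧ p.1 ≠ last ∧ p.2 ≠ last := by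
    intro p hp
    obtain ⟨h1, h2⟩ := (hSmem p).mp hp
    refine ⟨ne_of_lt h1, ?_, h2⟩
    intro hcon
    exact absurd (lt_trans (hcon ▸ h1) (hmax p.2 h2)) (lt_irrefl _)
  clear_value S
  -- the generators span the wedge square
  have hsub_mem : ∀ i j : Fin n, i ≠ last → j ≠ last →
      (Submodule.Quotient.mk (u i ⊗ₜ[ZMod 2] u j) : WedgeSq (ZMod 2) M)
        ∈ Submodule.span (ZMod 2) (g '' ↑S) := by
    intro i j hi hj
    rcases lt_trichotomy i j with h | h | h
    · exact Submodule.subset_span ⟨(i, j), Finset.mem_coe.mpr ((hSmem _).mpr ⟨h, hj⟩), hg_apply _⟩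
    · subst h; rw [hmk_diag]; exact Submodule.zero_mem _
    · rw [hmk_symm]
      exact Submodule.subset_span ⟨(j, i), Finset.mem_coe.mpr ((hSmem _).mpr ⟨h, hi⟩), hg_apply _⟩
  have hspan : Submodule.span (ZMod 2) (g '' ↑S) = ⊤ := by
    rw [eq_top_iff]
    intro z _
    obtain ⟨t, rfl⟩ := Submodule.Quotient.mk_surjective _ z
    have ht : t ∈ Submodule.span (ZMod 2) {w : TensorProduct (ZMod 2) M M | ∃ m n, m ⊗ₜ[ZMod 2] n = w} := by
      rw [TensorProduct.span_tmul_eq_top]; trivial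
    refine Submodule.span_induction ?_ ?_ ?_ ?_ ht
    · rintro w ⟨x, y, rfl⟩
      rw [← Submodule.mkQ_apply]
      rw [hrep x, hrep y, TensorProduct.sum_tmul]
      rw [map_sum]
      apply Submodule.sum_mem
      intro i hiF
      rw [TensorProduct.tmul_sum, map_sum]
      apply Submodule.sum_mem
      intro j hjF
      rw [TensorProduct.tmul_smul, ← TensorProduct.smul_tmul', map_smul, map_smul]
      apply Submodule.smul_mem
      apply Submodule.smul_mem
      rw [Submodule.mkQ_apply]
      exact hsub_mem i j (Finset.mem_filter.mp hiF).2 (Finset.mem_filter.mp hjF).2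
    · rw [← Submodule.mkQ_apply, map_zero]; exact Submodule.zero_mem _
    · intro w1 w2 _ _ hw1 hw2
      rw [← Submodule.mkQ_apply, map_add]
      exact Submodule.add_mem _ (by rwa [Submodule.mkQ_apply]) (by rwa [Submodule.mkQ_apply])
    · intro c w _ hw
      rw [← Submodule.mkQ_apply, map_smul]
      exact Submodule.smul_mem _ _ (by rwa [Submodule.mkQ_apply])
  -- the "identity from dual basis" map
  set L : WedgeSq (ZMod 2) M →ₗ[ZMod 2] WedgeSq (ZMod 2) M :=
    ∑ p ∈ S, (LinearMap.toSpanSingleton (ZMod 2) (WedgeSq (ZMod 2) M) (g p)).comp (β p.1 p.2)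
    with hL
  have hLid : L = LinearMap.id := by
    apply LinearMap.ext_on hspan
    rintro x ⟨p, hp, rfl⟩
    have hpS : p ∈ S := Finset.mem_coe.mp hp
    obtain ⟨hp12, hp1, hp2⟩ := hSfacts p hpS
    rw [LinearMap.id_apply, hL, LinearMap.sum_apply]
    rw [Finset.sum_eq_single_of_mem p hpS]
    · rw [LinearMap.comp_apply, LinearMap.toSpanSingleton_apply, hg_apply,
        hβmk _ _ _ _ hp12 hp1 hp2 hp12 hp1 hp2, if_pos (Or.inl ⟨rfl, rfl⟩), one_smul]
    · intro q hqS hqp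
      obtain ⟨hq12, hq1, hq2⟩ := hSfacts q hqS
      rw [LinearMap.comp_apply, LinearMap.toSpanSingleton_apply, hg_apply,
        hβmk _ _ _ _ hq12 hq1 hq2 hp12 hp1 hp2]
      rw [if_neg, zero_smul]
      rintro (⟨e1, e2⟩ | ⟨e1, e2⟩)
      · exact hqp (Prod.ext e1 e2)
      · have hlt1 := (hSmem p).mp hpS |>.1
        have hlt2 := (hSmem q).mp hqS |>.1
        rw [← e1, ← e2] at hlt1
        exact absurd (lt_trans hlt2 hlt1) (lt_irrefl _)
  clear_value L
  -- the key vanishing: Bq a b A = 0 for a ≠ b off last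
  have hε : ∀ a b : Fin n, a ≠ b → a ≠ last → b ≠ last → Bq M a b A = 0 := by
    intro a b hab ha hb
    have hterm : ∀ i : Fin n, β a b (φ (u i)) = Bq M a b A := by
      intro i
      rw [hφu i, hβ_apply, hBqequiv, hBqequiv, hBqequiv, Equiv.swap_inv]
      rw [Equiv.swap_apply_right]
      by_cases hia : i = a
      · subst hia
        rw [Equiv.swap_apply_left,
          Equiv.swap_apply_of_ne_of_ne (Ne.symm hab) hb]
        have e1 : Bq M last b A = Bq M b last A := hv_symm last b
        have e2 : Bq M b last A = Bq M i last A := hlastv b i hb ha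
        have e3 : Bq M i last A = Bq M last i A := hv_symm i last
        have e4 : Bq M b i A = Bq M i b A := hv_symm b i
        have e5 := zmod2_add_self (Bq M last i A)
        linear_combination e1 + e2 + e3 + e4 + e5
      · by_cases hib : i = b
        · subst hib
          rw [Equiv.swap_apply_left,
            Equiv.swap_apply_of_ne_of_ne hab ha]
          have e1 : Bq M a last A = Bq M i last A := hlastv a i ha hb
          have e2 : Bq M i last A = Bq M last i A := hv_symm i last
          have e3 := zmod2_add_self (Bq M last i A)
          linear_combination e1 + e2 + e3
        · by_cases hil : i = last
          · rw [hil, Equiv.swap_self]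
            simp only [Equiv.coe_refl, id_eq]
            have e1 : Bq M a last A = Bq M b last A := hlastv a b ha hb
            have e2 := zmod2_add_self (Bq M b last A)
            linear_combination e1 + e2
          · rw [Equiv.swap_apply_of_ne_of_ne (fun h => hia h.symm) ha,
              Equiv.swap_apply_of_ne_of_ne (fun h => hib h.symm) hb]
            have e1 : Bq M a i A = Bq M a b A := by
              apply hpair a i a b (fun h => hia h.symm) hab ha hil ha hb
            have e2 : Bq M b i A = Bq M a b A := by
              have h' : Bq M b i A = Bq M b a A :=
                hpair b i b a (fun h => hib h.symm) (Ne.symm hab) hb hil hb ha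
              rw [h', hv_symm b a]
            have e3 := zmod2_add_self (Bq M a b A)
            linear_combination e1 + e2 + e3
    have h0 : (0 : ZMod 2) = ∑ i : Fin n, β a b (φ (u i)) := by
      have e1 : φ (∑ i, u i) = ∑ i, φ (u i) := map_sum φ u Finset.univ
      have e2 : β a b (∑ i, φ (u i)) = ∑ i, β a b (φ (u i)) :=
        map_sum (β a b) (fun i => φ (u i)) Finset.univ
      calc (0 : ZMod 2) = β a b (φ 0) := by rw [map_zero, map_zero]
        _ = β a b (φ (∑ i, u i)) := by rw [husum]
        _ = β a b (∑ i, φ (u i)) := by rw [e1]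
        _ = ∑ i, β a b (φ (u i)) := e2
    have h1 : ∑ i : Fin n, β a b (φ (u i)) = Bq M a b A := by
      rw [Finset.sum_congr rfl (fun i _ => hterm i)]
      rw [Finset.sum_const, Finset.card_univ, Fintype.card_fin, nsmul_eq_mul, hn2, one_mul]
    exact (h0.trans h1).symm
  -- hence A = 0
  have hA0 : A = 0 := by
    have h1 : L A = A := by rw [hLid, LinearMap.id_apply]
    have h2 : ∀ p ∈ S,
        ((LinearMap.toSpanSingleton (ZMod 2) (WedgeSq (ZMod 2) M) (g p)).comp (β p.1 p.2)) A
          = 0 := by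
      intro p hp
      obtain ⟨hp12, hp1, hp2⟩ := hSfacts p hp
      rw [LinearMap.comp_apply, LinearMap.toSpanSingleton_apply]
      have e0 := hε p.1 p.2 hp12 hp1 hp2
      have e1 : Bq M p.1 last A = Bq M p.2 last A := hlastv p.1 p.2 hp1 hp2
      have e2 := zmod2_add_self (Bq M p.2 last A)
      have : β p.1 p.2 A = 0 := by
        rw [hβ_apply]
        linear_combination e0 + e1 + e2
      rw [this, zero_smul]
    rw [hL, LinearMap.sum_apply, Finset.sum_congr rfl h2, Finset.sum_const, smul_zero] at h1
    exact h1.symm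
  -- conclude φ = 0
  apply LinearMap.ext
  intro x
  rw [hrep x, map_sum, LinearMap.zero_apply]
  apply Finset.sum_eq_zero
  intro i _
  rw [map_smul, hφu i, hA0, map_zero, smul_zero]
end
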